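/- If B is an SKS on M and sBw, s → u, and for all v with w →^+ v we have ¬(uBv), then uBw. (Key step of the completeness proof: in any matching of a fullpath through s,u by a fullpath from w, the match index of u must be 0.) -/

import Mathlib

universe u v

section Defs

variable {S : Type u} {T : Type v}

/-- A fullpath of the transition relation `R`. -/
def FullPath (R : S → S → Prop) (σ : ℕ → S) : Prop := ∀ i, R (σ i) (σ (i+1))

/-- Strictly increasing sequences of naturals starting at 0. -/
def IsINC (π : ℕ → ℕ) : Prop := StrictMono π ∧ π 0 = 0

/-- Every element of the i-th segment of `σ` (w.r.t. `π`) is `B`-related to the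
first element of the i-th segment of `δ` (w.r.t. `ξ`). -/
def Corr (B : S → T → Prop) (σ : ℕ → S) (π : ℕ → ℕ) (δ : ℕ → T) (ξ : ℕ → ℕ) : Prop :=
  ∀ i n, π i ≤ n → n < π (i+1) → B (σ n) (δ (ξ i))

/-- `σ` matches `δ` under `B`. -/
def Match (B : S → T → Prop) (σ : ℕ → S) (δ : ℕ → T) : Prop :=
  ∃ π ξ, IsINC π ∧ IsINC ξ ∧ Corr B σ π δ ξ

/-- Skipping simulation. -/
def IsSKS {Lbl : Type v} (R : S → S → Prop) (L : S → Lbl) (B : S → S → Prop) : Prop :=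
  ∀ s w, B s w →
    L s = L w ∧
    ∀ σ, FullPath R σ → σ 0 = s → ∃ δ, FullPath R δ ∧ δ 0 = w ∧ Match B σ δ

/-- Well-founded skipping relation. -/
def IsWFSK {Lbl : Type v} (R : S → S → Prop) (L : S → Lbl) (B : S → S → Prop) : Prop :=
  (∀ s w, B s w → L s = L w) ∧
  ∃ (W : Type u) (lt : W → W → Prop) (_ : WellFounded lt)
    (rankt : S → S → W) (rankl : S → S → S → ℕ),
    ∀ s u w, R s u → B s w →
      (∃ v, R w v ∧ B u v) ∨
      (B u w ∧ lt (rankt u w) (rankt s w)) ∨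
      (∃ v, R w v ∧ B s v ∧ rankl v s u < rankl w s u) ∨
      (∃ v, (∃ x, R w x ∧ Relation.TransGen R x v) ∧ B u v)

/-- Reduced well-founded skipping relation. -/
def IsRWFSK {Lbl : Type v} (R : S → S → Prop) (L : S → Lbl) (B : S → S → Prop) : Prop :=
  (∀ s w, B s w → L s = L w) ∧
  ∃ (W : Type u) (lt : W → W → Prop) (_ : WellFounded lt) (rankt : S → S → W),
    ∀ s u w, R s u → B s w →
      (B u w ∧ lt (rankt u w) (rankt s w)) ∨
      (∃ v, Relation.TransGen R w v ∧ B u v)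

/-- Nodes of the computation tree of `R` rooted at `s`, represented as the finite
path from the root. -/
def CtreeNode (R : S → S → Prop) (s : S) (l : List S) : Prop :=
  l.head? = some s ∧ l.Chain' R

/-- Nodes of the tree `ranktCt(M,s,w)`: empty if `¬ B s w`; otherwise the largest
subtree of `ctree(M,s)` all of whose non-root nodes `⟨s,…,x⟩` satisfy `x B w` and
`¬ (x B v)` for every `v` with `w →⁺ v`. -/
def RanktCtNode (R : S → S → Prop) (B : S → S → Prop) (s w : S) (l : List S) : Prop :=
  B s w ∧ CtreeNode R s l ∧
  ∀ x ∈ l.tail, B x w ∧ ∀ v, Relation.TransGen R w v → ¬ B x v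

/-- `c` is a child of `p` in the tree with node-predicate `T'`. -/
def ChildRel (T' : List S → Prop) (c p : List S) : Prop :=
  T' c ∧ T' p ∧ ∃ v, c = p ++ [v]

-- The ordinal `size` of a node of a tree all of whose paths are finite:
-- `size(t,x) = ⋃_{c child of x} (size(t,c)+1)`.
open Classical in
noncomputable def nodeSize (T' : List S → Prop) (l : List S) : Ordinal.{u} :=
  if h : WellFounded (ChildRel T') then (h.apply l).rank else 0

/-- `size(ranktCt(M,s,w))`: the size of the root `⟨s⟩`. -/
noncomputable def treeSize (R : S → S → Prop) (B : S → S → Prop) (s w : S) : Ordinal.{u} :=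
  nodeSize (RanktCtNode R B s w) [s]

end Defs

/-! From `s B w` and `s → u`, match a fullpath `s, u, …` by a fullpath `δ` from `w`. The state `u`
lies in some segment of the match, so `u B δ k` for some `k`; every `δ k` with `k > 0` is reachable
from `w` by `→⁺`, hence the hypothesis forces `k = 0`, that is `u B w`. -/

section Matching

variable {S : Type u} {T : Type v}

theorem IsINC.exists_mem_segment {π : ℕ → ℕ} (hπ : IsINC π) (n : ℕ) :
    ∃ i, π i ≤ n ∧ n < π (i + 1) := by
  induction n with
  | zero => exact ⟨0, hπ.2.le, hπ.2.symm.trans_lt (hπ.1 Nat.zero_lt_one)⟩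
  | succ n ih =>
    obtain ⟨i, hle, hlt⟩ := ih
    rcases (Nat.succ_le_of_lt hlt).lt_or_eq with hlt' | heq
    · exact ⟨i, hle.trans n.le_succ, hlt'⟩
    · exact ⟨i + 1, heq.ge, heq.trans_lt (hπ.1 (Nat.lt_succ_self _))⟩

theorem Match.exists_rel {B : S → T → Prop} {σ : ℕ → S} {δ : ℕ → T} (hm : Match B σ δ) (n : ℕ) :
    ∃ k, B (σ n) (δ k) := by
  obtain ⟨π, ξ, hπ, -, hcorr⟩ := hm
  obtain ⟨i, hle, hlt⟩ := hπ.exists_mem_segment n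
  exact ⟨ξ i, hcorr i n hle hlt⟩

end Matching

section FullPaths

variable {S : Type u} {R : S → S → Prop}

theorem FullPath.transGen_succ {δ : ℕ → S} (hδ : FullPath R δ) (k : ℕ) :
    Relation.TransGen R (δ 0) (δ (k + 1)) := by
  induction k with
  | zero => exact .single (hδ 0)
  | succ k ih => exact ih.tail (hδ (k + 1))

theorem exists_fullPath_of_rel (hR : ∀ s, ∃ u, R s u) {s u : S} (hsu : R s u) :
    ∃ σ, FullPath R σ ∧ σ 0 = s ∧ σ 1 = u := by
  choose f hf using hR
  refine ⟨fun n => Nat.casesOn n s fun k => f^[k] u, ?_, rfl, rfl⟩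
  rintro (_ | k)
  · exact hsu
  · simpa only [Function.iterate_succ_apply'] using hf (f^[k] u)

end FullPaths

/-- If `B` is an SKS, `s B w`, `s → u`, and no `v` with `w →⁺ v`
satisfies `u B v`, then `u B w`. -/
theorem sks_step_match_at_zero {S : Type u} {Lbl : Type v}
    (R : S → S → Prop) (L : S → Lbl) (hR : ∀ s, ∃ u, R s u)
    (B : S → S → Prop) (h : IsSKS R L B)
    (s u w : S) (hsw : B s w) (hsu : R s u)
    (hno : ∀ v, Relation.TransGen R w v → ¬ B u v) :
    B u w := by
  obtain ⟨σ, hσ, hσ0, hσ1⟩ := exists_fullPath_of_rel hR hsu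
  obtain ⟨δ, hδ, hδ0, hmatch⟩ := (h s w hsw).2 σ hσ hσ0
  obtain ⟨k, hk⟩ := hmatch.exists_rel 1
  rw [hσ1] at hk
  cases k with
  | zero => rwa [hδ0] at hk
  | succ k => exact absurd hk (hno _ (hδ0 ▸ hδ.transGen_succ k))
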